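/- arXiv:2206.05256 — 2 statements merged into one kernel-verified Lean document; each statement's English description precedes it below -/
import Mathlib

section
/- Assume n ≥ k ≥ 1. Let (S_1, …, S_k) be a generic zero pattern for k×n matrices of order ℓ, whose distinct nonempty sets are A_1, …, A_ℓ with A_i occurring δ_i times. Then there exist subsets A'_1, …, A'_ℓ ⊆ [n] with A'_i ⊇ A_i and |A'_i| = k − δ_i for every i ∈ [ℓ], such that the zero pattern (S'_1, …, S'_k) consisting of δ_i copies of A'_i for each i ∈ [ℓ] together with k − Σ_{i=1}^ℓ δ_i copies of the empty set is a generic zero pattern of order ℓ. -/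
/-!
Genericity of a pattern with `δ j` copies of `B j` amounts to
`#(⋂_{j ∈ J} B j) + ∑_{j ∈ J} δ j ≤ k` for every nonempty `J`, and the sets are grown one element
at a time. Call `J` tight when equality holds. By submodularity of `J ↦ #(⋂_{j ∈ J} B j)`, the tight
sets containing `j` are closed under intersection, so there is a least one, `J₀`. If
`#(B j) + δ j < k`, adding to `B j` any `x` outside `B j ∪ ⋂_{i ∈ J₀ \ {j}} B i` keeps the
condition: it can only fail for a tight `J ∋ j` with `x ∈ ⋂_{i ∈ J \ {j}} B i`, which `J₀ ⊆ J`
excludes. Inclusion–exclusion together with the tightness of `J₀` shows that this union has at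
most `#(B j) + δ j < k ≤ n` elements, so such an `x` exists.
-/

open Finset

/-- `S = (S_1, …, S_k)` is a generic zero pattern: `|∩_{i ∈ I} S_i| ≤ k − |I|` for
every nonempty `I ⊆ [k]`. -/
def IsGenericZP {k n : ℕ} (S : Fin k → Finset (Fin n)) : Prop :=
  ∀ I : Finset (Fin k), I.Nonempty → (I.inf S).card ≤ k - I.card

/-- The order of a zero pattern: the number of distinct nonempty sets among the `S_i`. -/
def patternOrder {k n : ℕ} (S : Fin k → Finset (Fin n)) : ℕ :=
  ((Finset.univ.image S).erase ∅).card

section Pattern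

variable {ι α : Type*} [Fintype ι]

def replicatePattern (k : ℕ) (δ : ι → ℕ) (B : ι → Finset α) : Multiset (Finset α) :=
  (∑ i, Multiset.replicate (δ i) (B i)) + Multiset.replicate (k - ∑ i, δ i) ∅

variable {k : ℕ} {δ : ι → ℕ} {B : ι → Finset α} {S : Fin k → Finset α}

lemma count_replicatePattern [DecidableEq α] (hB : Function.Injective B) (hne : ∀ i, B i ≠ ∅)
    (j : ι) : (replicatePattern k δ B).count (B j) = δ j := by
  simp only [replicatePattern, Multiset.count_add, Multiset.count_sum', Multiset.count_replicate,
    if_neg (hne j).symm, add_zero]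
  rw [sum_eq_single j (fun i _ hij => if_neg (hB.ne hij)) (by simp), if_pos rfl]

lemma mem_replicatePattern {s : Finset α} :
    s ∈ replicatePattern k δ B ↔ (∃ j, δ j ≠ 0 ∧ s = B j) ∨ (k - ∑ i, δ i ≠ 0 ∧ s = ∅) := by
  simp only [replicatePattern, Multiset.mem_add, Multiset.mem_sum, mem_univ, true_and,
    Multiset.mem_replicate]

lemma card_filter_eq_of_map_eq [DecidableEq α] (hS : univ.val.map S = replicatePattern k δ B)
    (hB : Function.Injective B) (hne : ∀ i, B i ≠ ∅) (j : ι) : #{i | S i = B j} = δ j := by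
  rw [← count_replicatePattern (k := k) (δ := δ) hB hne j, ← hS, Multiset.count_map, card_def,
    filter_val]
  simp only [eq_comm]

lemma exists_eq_of_map_eq_of_ne_empty (hS : univ.val.map S = replicatePattern k δ B)
    {i : Fin k} (hi : S i ≠ ∅) : ∃ j, B j = S i := by
  have : S i ∈ univ.val.map S := Multiset.mem_map_of_mem _ (mem_univ i)
  rw [hS, mem_replicatePattern] at this
  grind

lemma exists_eq_of_map_eq_of_ne_zero (hS : univ.val.map S = replicatePattern k δ B)
    {j : ι} (hj : δ j ≠ 0) : ∃ i, S i = B j := by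
  have : B j ∈ univ.val.map S := by
    rw [hS, mem_replicatePattern]; exact .inl ⟨j, hj, rfl⟩
  simpa using this

end Pattern

lemma Finset.mem_inf_update_insert {ι α : Type*} [DecidableEq ι] [Fintype α] [DecidableEq α]
    {B : ι → Finset α} {J : Finset ι} {j : ι} {x y : α}
    (hy : y ∈ J.inf (Function.update B j (insert x (B j)))) :
    y ∈ J.inf B ∨ y = x ∧ x ∈ (J.erase j).inf B := by
  rw [mem_inf] at hy
  by_cases hyx : y = x
  · subst hyx
    refine .inr ⟨rfl, mem_inf.2 fun i hi => ?_⟩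
    simpa [ne_of_mem_erase hi] using hy i (mem_of_mem_erase hi)
  · refine .inl (mem_inf.2 fun i hi => ?_)
    rcases eq_or_ne i j with rfl | hij
    · simpa [hyx] using hy i hi
    · simpa [hij] using hy i hi

section Family

variable {ι α : Type*} [Fintype α] [DecidableEq α]

def IsGenericFamily (k : ℕ) (δ : ι → ℕ) (B : ι → Finset α) : Prop :=
  ∀ J : Finset ι, J.Nonempty → #(J.inf B) + ∑ i ∈ J, δ i ≤ k

def IsTight (k : ℕ) (δ : ι → ℕ) (B : ι → Finset α) (J : Finset ι) : Prop :=
  #(J.inf B) + ∑ i ∈ J, δ i = k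

variable {k : ℕ} {δ : ι → ℕ} {B : ι → Finset α}

namespace IsGenericFamily

lemma card_add_le (hB : IsGenericFamily k δ B) (j : ι) : #(B j) + δ j ≤ k := by
  simpa using hB {j} (singleton_nonempty j)

lemma isTight_inter [DecidableEq ι] (hB : IsGenericFamily k δ B) {J₁ J₂ : Finset ι}
    (hJ : (J₁ ∩ J₂).Nonempty) (h₁ : IsTight k δ B J₁) (h₂ : IsTight k δ B J₂) :
    IsTight k δ B (J₁ ∩ J₂) := by
  have hunion := hB (J₁ ∪ J₂) (hJ.mono inter_subset_union)
  have hinter := hB (J₁ ∩ J₂) hJ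
  rw [inf_union, inf_eq_inter] at hunion
  have hsum := sum_union_inter (s₁ := J₁) (s₂ := J₂) (f := δ)
  have hcard := card_union_add_card_inter (J₁.inf B) (J₂.inf B)
  have hsub : J₁.inf B ∪ J₂.inf B ⊆ (J₁ ∩ J₂).inf B :=
    union_subset (inf_mono inter_subset_left) (inf_mono inter_subset_right)
  have := card_le_card hsub
  unfold IsTight at *
  omega

lemma exists_minimal_isTight [DecidableEq ι] (hB : IsGenericFamily k δ B) {j : ι}
    (h : ∃ J, j ∈ J ∧ IsTight k δ B J) :
    ∃ J₀, j ∈ J₀ ∧ IsTight k δ B J₀ ∧ ∀ J, j ∈ J → IsTight k δ B J → J₀ ⊆ J := by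
  obtain ⟨J₀, ⟨hjJ₀, hJ₀⟩, hmin⟩ := wellFounded_lt.has_min {J | j ∈ J ∧ IsTight k δ B J} h
  refine ⟨J₀, hjJ₀, hJ₀, fun J hjJ hJ => ?_⟩
  have hmem : J₀ ∩ J ∈ {J | j ∈ J ∧ IsTight k δ B J} :=
    ⟨mem_inter.2 ⟨hjJ₀, hjJ⟩, hB.isTight_inter ⟨j, mem_inter.2 ⟨hjJ₀, hjJ⟩⟩ hJ₀ hJ⟩
  have : J₀ ∩ J = J₀ := by
    by_contra hne
    exact hmin _ hmem (lt_of_le_of_ne inter_subset_left hne)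
  exact this ▸ inter_subset_right

lemma card_union_inf_erase_le [DecidableEq ι] (hB : IsGenericFamily k δ B) {J : Finset ι} {j : ι}
    (hj : j ∈ J) (hJ : IsTight k δ B J) (hJj : (J.erase j).Nonempty) :
    #(B j ∪ (J.erase j).inf B) ≤ #(B j) + δ j := by
  have hrest := hB _ hJj
  have hinf : B j ∩ (J.erase j).inf B = J.inf B := by
    conv_rhs => rw [← insert_erase hj, inf_insert]
    rfl
  have hsum := add_sum_erase J δ hj
  have hcard := card_union_add_card_inter (B j) ((J.erase j).inf B)
  rw [hinf] at hcard
  unfold IsTight at hJ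
  omega

lemma exists_notMem_inf_erase_of_isTight [DecidableEq ι] (hB : IsGenericFamily k δ B)
    (hkα : k ≤ Fintype.card α) {j : ι} (hj : #(B j) + δ j < k) :
    ∃ x ∉ B j, ∀ J, j ∈ J → IsTight k δ B J → x ∉ (J.erase j).inf B := by
  suffices ∃ C : Finset α, #(B j ∪ C) < Fintype.card α ∧
      ∀ J, j ∈ J → IsTight k δ B J → (J.erase j).inf B ⊆ C by
    obtain ⟨C, hC, hsub⟩ := this
    obtain ⟨x, -, hx⟩ := exists_mem_notMem_of_card_lt_card (t := univ) (by simpa using hC)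
    exact ⟨x, fun h => hx (mem_union_left _ h),
      fun J hjJ hJ h => hx (mem_union_right _ (hsub J hjJ hJ h))⟩
  by_cases h : ∃ J, j ∈ J ∧ IsTight k δ B J
  · obtain ⟨J₀, hjJ₀, hJ₀, hmin⟩ := hB.exists_minimal_isTight h
    have hJ₀j : (J₀.erase j).Nonempty := by
      rw [nonempty_iff_ne_empty, Ne, erase_eq_empty_iff]
      rintro (rfl | rfl)
      · exact notMem_empty j hjJ₀
      · simp only [IsTight, inf_singleton, sum_singleton] at hJ₀
        omega
    refine ⟨(J₀.erase j).inf B, ?_,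
      fun J hjJ hJ => inf_mono (erase_subset_erase j (hmin J hjJ hJ))⟩
    have := hB.card_union_inf_erase_le hjJ₀ hJ₀ hJ₀j
    omega
  · push Not at h
    exact ⟨∅, by simp only [union_empty]; omega, fun J hjJ hJ => absurd hJ (h J hjJ)⟩

lemma update_insert [DecidableEq ι] (hB : IsGenericFamily k δ B) {j : ι} {x : α}
    (hx : ∀ J, j ∈ J → IsTight k δ B J → x ∉ (J.erase j).inf B) :
    IsGenericFamily k δ (Function.update B j (insert x (B j))) := by
  intro J hJ
  set B' := Function.update B j (insert x (B j))
  by_cases hjJ : j ∉ J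
  · have : J.inf B' = J.inf B :=
      inf_congr rfl fun i hi => Function.update_of_ne (ne_of_mem_of_not_mem hi hjJ) _ _
    exact this ▸ hB J hJ
  rw [not_not] at hjJ
  by_cases ht : IsTight k δ B J
  · have : J.inf B' ⊆ J.inf B := fun y hy =>
      (mem_inf_update_insert hy).resolve_right fun h => hx J hjJ ht h.2
    exact (Nat.add_le_add_right (card_le_card this) _).trans (hB J hJ)
  · have hsub : J.inf B' ⊆ insert x (J.inf B) := fun y hy =>
      (mem_inf_update_insert hy).elim mem_insert_of_mem fun h => h.1 ▸ mem_insert_self _ _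
    have := card_le_card hsub
    have := card_insert_le x (J.inf B)
    have := hB J hJ
    unfold IsTight at ht
    omega

lemma exists_maximal_extension [Fintype ι] [DecidableEq ι] (hB : IsGenericFamily k δ B)
    (hkα : k ≤ Fintype.card α) :
    ∃ B' : ι → Finset α, (∀ j, B j ⊆ B' j ∧ #(B' j) = k - δ j) ∧ IsGenericFamily k δ B' := by
  induction hD : ∑ j, (k - δ j - #(B j)) using Nat.strong_induction_on generalizing B with
  | _ D ih =>
    by_cases hsat : ∀ j, k ≤ #(B j) + δ j
    · refine ⟨B, fun j => ⟨subset_rfl, ?_⟩, hB⟩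
      have := hsat j
      have := hB.card_add_le j
      omega
    push Not at hsat
    obtain ⟨j, hj⟩ := hsat
    obtain ⟨x, hxB, hx⟩ := hB.exists_notMem_inf_erase_of_isTight hkα hj
    set B₁ := Function.update B j (insert x (B j))
    have hBB₁ : ∀ i, B i ⊆ B₁ i := by
      intro i
      rcases eq_or_ne i j with rfl | hij
      · simp [B₁, subset_insert]
      · simp [B₁, hij]
    have hlt : ∑ i, (k - δ i - #(B₁ i)) < D := hD ▸ sum_lt_sum
      (fun i _ => Nat.sub_le_sub_left (card_le_card (hBB₁ i)) _)
      ⟨j, mem_univ j, by simp only [B₁, Function.update_self, card_insert_of_notMem hxB]; omega⟩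
    obtain ⟨B', hB₁B', hB'⟩ := ih _ hlt (hB.update_insert hx) rfl
    exact ⟨B', fun i => ⟨(hBB₁ i).trans (hB₁B' i).1, (hB₁B' i).2⟩, hB'⟩

lemma injective_of_card_eq (hB : IsGenericFamily k δ B) (hδ : ∀ i, 0 < δ i)
    (hcard : ∀ i, #(B i) = k - δ i) : Function.Injective B := by
  classical
  intro i j hij
  by_contra hne
  have hpair := hB {i, j} (insert_nonempty _ _)
  rw [inf_insert, inf_singleton, ← hij, inf_idem, sum_pair hne, hcard i] at hpair
  have := hB.card_add_le i
  have := hδ j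
  omega

end IsGenericFamily
end Family

lemma Finset.inf_eq_inf_of_image_eq {κ ι β : Type*} [SemilatticeInf β] [OrderTop β]
    [DecidableEq β] {I : Finset κ} {J : Finset ι} {S : κ → β} {B : ι → β}
    (h : I.image S = J.image B) : I.inf S = J.inf B := by
  simpa [inf_image] using congrArg (fun s => s.inf id) h

section Bridge

variable {ι : Type*} [Fintype ι] {n k : ℕ} {δ : ι → ℕ}
  {B : ι → Finset (Fin n)} {S : Fin k → Finset (Fin n)}

lemma card_filter_mem_image_of_map_eq [DecidableEq ι] (hS : univ.val.map S = replicatePattern k δ B)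
    (hB : Function.Injective B) (hne : ∀ i, B i ≠ ∅) (J : Finset ι) :
    #{i | S i ∈ J.image B} = ∑ j ∈ J, δ j := by
  rw [card_eq_sum_card_fiberwise (f := S) (t := J.image B)
    fun i hi => mem_coe.2 (mem_filter.1 (mem_coe.1 hi)).2, sum_image hB.injOn]
  refine sum_congr rfl fun j hj => ?_
  rw [filter_filter, ← card_filter_eq_of_map_eq hS hB hne j]
  congr 1
  exact filter_congr fun i _ => and_iff_right_of_imp fun h => h ▸ mem_image_of_mem B hj

lemma isGenericFamily_of_isGenericZP [DecidableEq ι] (hS : univ.val.map S = replicatePattern k δ B)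
    (hB : Function.Injective B) (hne : ∀ i, B i ≠ ∅) (hδ : ∀ i, 0 < δ i)
    (hgen : IsGenericZP S) : IsGenericFamily k δ B := by
  intro J hJ
  set I : Finset (Fin k) := {i | S i ∈ J.image B}
  have himage : I.image S = J.image B := by
    ext s
    simp only [I, mem_image, mem_filter, mem_univ, true_and]
    constructor
    · rintro ⟨i, hi, rfl⟩
      exact hi
    · rintro ⟨j, hj, rfl⟩
      obtain ⟨i, hi⟩ := exists_eq_of_map_eq_of_ne_zero hS (hδ j).ne'
      exact ⟨i, ⟨j, hj, hi.symm⟩, hi⟩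
  have hI : I.Nonempty := by
    rw [← image_nonempty (f := S), himage]
    exact hJ.image B
  have hgenI := hgen I hI
  rw [inf_eq_inf_of_image_eq himage] at hgenI
  have hcard : #I = _ := card_filter_mem_image_of_map_eq hS hB hne J
  have := card_le_univ I
  rw [Fintype.card_fin] at this
  omega

lemma isGenericZP_of_isGenericFamily [DecidableEq ι] (hS : univ.val.map S = replicatePattern k δ B)
    (hB : Function.Injective B) (hne : ∀ i, B i ≠ ∅) (hfam : IsGenericFamily k δ B) :
    IsGenericZP S := by
  intro I hI
  by_cases h0 : ∃ i ∈ I, S i = ∅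
  · obtain ⟨i, hi, hSi⟩ := h0
    have : I.inf S = ∅ := subset_empty.1 (hSi ▸ inf_le hi)
    rw [this, card_empty]
    exact Nat.zero_le _
  push Not at h0
  set J : Finset ι := {j | B j ∈ I.image S}
  have himage : I.image S = J.image B := by
    ext s
    simp only [J, mem_image, mem_filter, mem_univ, true_and]
    constructor
    · rintro ⟨i, hi, rfl⟩
      obtain ⟨j, hj⟩ := exists_eq_of_map_eq_of_ne_empty hS (h0 i hi).ne_empty
      exact ⟨j, hj ▸ ⟨i, hi, rfl⟩, hj⟩
    · rintro ⟨j, ⟨i, hi, hij⟩, rfl⟩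
      exact ⟨i, hi, hij⟩
  have hJ : J.Nonempty := by
    rw [← image_nonempty (f := B), ← himage]
    exact hI.image S
  have hIJ : I ⊆ univ.filter (fun i => S i ∈ J.image B) := fun i hi => by
    rw [mem_filter, ← himage]
    exact ⟨mem_univ i, mem_image_of_mem S hi⟩
  have hcard := card_le_card hIJ
  rw [card_filter_mem_image_of_map_eq hS hB hne J] at hcard
  rw [inf_eq_inf_of_image_eq himage]
  have := hfam J hJ
  omega

lemma patternOrder_eq_of_map_eq (hS : univ.val.map S = replicatePattern k δ B)
    (hB : Function.Injective B) (hne : ∀ i, B i ≠ ∅) (hδ : ∀ i, 0 < δ i) :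
    patternOrder S = Fintype.card ι := by
  have : (univ.image S).erase ∅ = univ.image B := by
    ext s
    simp only [mem_erase, mem_image, mem_univ, true_and]
    constructor
    · rintro ⟨hs, i, rfl⟩
      exact exists_eq_of_map_eq_of_ne_empty hS hs
    · rintro ⟨j, rfl⟩
      exact ⟨hne j, exists_eq_of_map_eq_of_ne_zero hS (hδ j).ne'⟩
  rw [patternOrder, this, card_image_of_injective _ hB, card_univ]

end Bridge

theorem gzp_extends_to_maximal_general (n k ℓ : ℕ) (hkn : k ≤ n)
    (A : Fin ℓ → Finset (Fin n)) (hAinj : Function.Injective A)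
    (hAne : ∀ i, (A i).Nonempty)
    (δ : Fin ℓ → ℕ) (hδpos : ∀ i, 1 ≤ δ i)
    (S : Fin k → Finset (Fin n))
    (hS : Finset.univ.val.map S =
        (∑ i, Multiset.replicate (δ i) (A i)) + Multiset.replicate (k - ∑ i, δ i) ∅)
    (hgen : IsGenericZP S) :
    ∃ A' : Fin ℓ → Finset (Fin n),
      (∀ i, A i ⊆ A' i ∧ (A' i).card = k - δ i) ∧
      ∀ S' : Fin k → Finset (Fin n),
        Finset.univ.val.map S' =
          (∑ i, Multiset.replicate (δ i) (A' i)) + Multiset.replicate (k - ∑ i, δ i) ∅ →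
        IsGenericZP S' ∧ patternOrder S' = ℓ := by
  have hAne' : ∀ i, A i ≠ ∅ := fun i => (hAne i).ne_empty
  have hfam := isGenericFamily_of_isGenericZP hS hAinj hAne' hδpos hgen
  obtain ⟨A', hAA', hfam'⟩ := hfam.exists_maximal_extension (by rwa [Fintype.card_fin])
  have hA'inj := hfam'.injective_of_card_eq hδpos fun i => (hAA' i).2
  have hA'ne : ∀ i, A' i ≠ ∅ := fun i => ((hAne i).mono (hAA' i).1).ne_empty
  refine ⟨A', hAA', fun S' hS' => ⟨isGenericZP_of_isGenericFamily hS' hA'inj hA'ne hfam', ?_⟩⟩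
  rw [patternOrder_eq_of_map_eq hS' hA'inj hA'ne hδpos, Fintype.card_fin]

theorem gzp_extends_to_maximal (n k ℓ : ℕ) (hk : 1 ≤ k) (hkn : k ≤ n)
    (A : Fin ℓ → Finset (Fin n)) (hAinj : Function.Injective A)
    (hAne : ∀ i, (A i).Nonempty)
    (δ : Fin ℓ → ℕ) (hδpos : ∀ i, 1 ≤ δ i) (hδ : ∑ i, δ i ≤ k)
    (S : Fin k → Finset (Fin n))
    (hS : Finset.univ.val.map S =
        (∑ i, Multiset.replicate (δ i) (A i)) + Multiset.replicate (k - ∑ i, δ i) ∅)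
    (hgen : IsGenericZP S) :
    ∃ A' : Fin ℓ → Finset (Fin n),
      (∀ i, A i ⊆ A' i ∧ (A' i).card = k - δ i) ∧
      ∀ S' : Fin k → Finset (Fin n),
        Finset.univ.val.map S' =
          (∑ i, Multiset.replicate (δ i) (A' i)) + Multiset.replicate (k - ∑ i, δ i) ∅ →
        IsGenericZP S' ∧ patternOrder S' = ℓ :=
  gzp_extends_to_maximal_general n k ℓ hkn A hAinj hAne δ hδpos S hS hgen
end

section
/- Let 1 ≤ k ≤ n and ℓ ≥ 1, and let C be an (n,k)-code over a field F which is GZP(ℓ), with generator matrix G. Then for all subsets A_1, …, A_ℓ ⊆ [n], each of size at most k, dim(G_{A_1} ∩ ⋯ ∩ G_{A_ℓ}) = max over all partitions P_1 ⊔ ⋯ ⊔ P_s = [ℓ] into nonempty parts of (Σ_{i=1}^s |A_{P_i}| − (s−1)·k). In particular, every GZP(ℓ) code is MDS(ℓ). -/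
/-!
Lower bound: for a partition `P` of `[ℓ]`, the intersection of the spaces `G_{A_p}` (`p ∈ P`) lies
in `⋂ᵢ G_{A_i}`, and the dimension formula `dim (U ⊓ V) ≥ dim U + dim V - k` applied `s - 1` times
bounds its dimension below by `Σ_p dim G_{A_p} - (s - 1) k`, where `dim G_{A_p} = |A_p|` by the
MDS property.

Upper bound: `h T = k - |A_T|` is submodular on intersecting pairs, so a vector `m : [ℓ] → ℕ`
with `Σ_{i ∈ T} m i ≤ h T` for all `T` and maximal total is tight on the blocks of a partition `P`
(Dilworth truncation). Putting the zeros `A_i` on `m i` rows of their own gives a generic zero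
pattern of order at most `ℓ`. The `Σ m = Σ_p h p` rows of an invertible `M` attaining it are independent
and vanish on `⋂ᵢ G_{A_i}`, so its dimension is at most `k - Σ_p h p = partVal k A P`.
-/

open Finset

noncomputable section

/-- `G_A`: the span of the columns of `G` indexed by `A`. -/
def colSpan {K : Type*} [Field K] {k n : ℕ} (G : Matrix (Fin k) (Fin n) K)
    (A : Finset (Fin n)) : Submodule K (Fin k → K) :=
  Submodule.span K ((fun j i => G i j) '' (A : Set (Fin n)))

/-- The value `Σ_{p ∈ P} |∩_{j ∈ p} A_j| − (s − 1)·k` associated to a partition `P`. -/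
def partVal {ℓ n : ℕ} (k : ℕ) (A : Fin ℓ → Finset (Fin n))
    (P : Finpartition (Finset.univ : Finset (Fin ℓ))) : ℤ :=
  (∑ p ∈ P.parts, ((p.inf A).card : ℤ)) - ((P.parts.card : ℤ) - 1) * k

/-- `G` is a generator matrix of the code `C`: its rows form a basis of `C`. -/
def IsGenMatrix {F : Type*} [Field F] {k n : ℕ} (C : Submodule F (Fin n → F))
    (G : Matrix (Fin k) (Fin n) F) : Prop :=
  LinearIndependent F (fun i => G i) ∧ Submodule.span F (Set.range fun i => G i) = C

/-- `G` attains the zero pattern `S`. -/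
def Attains {F : Type*} [Field F] {k n : ℕ} (G : Matrix (Fin k) (Fin n) F)
    (S : Fin k → Finset (Fin n)) : Prop :=
  ∃ M : Matrix (Fin k) (Fin k) F, IsUnit M.det ∧ ∀ i j, j ∈ S i → (M * G) i j = 0

/-- `C` is `GZP(ℓ)`. -/
def IsGZP {F : Type*} [Field F] (n k ℓ : ℕ) (C : Submodule F (Fin n → F)) : Prop :=
  ∀ G : Matrix (Fin k) (Fin n) F, IsGenMatrix C G →
    (∀ A : Finset (Fin n), A.card = k → colSpan G A = ⊤) ∧
    (∀ S : Fin k → Finset (Fin n), IsGenericZP S → patternOrder S ≤ ℓ → Attains G S)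

open Function
open scoped Matrix

section DilworthTruncation

variable {ι : Type*} [DecidableEq ι] {h : Finset ι → ℕ} {m : ι → ℕ}

theorem sum_union_eq_of_sum_eq
    (hsub : ∀ T T' : Finset ι, (T ∩ T').Nonempty → h (T ∪ T') + h (T ∩ T') ≤ h T + h T')
    (hm : ∀ T, ∑ i ∈ T, m i ≤ h T) {T T' : Finset ι} (hTT' : (T ∩ T').Nonempty)
    (hT : ∑ i ∈ T, m i = h T) (hT' : ∑ i ∈ T', m i = h T') :
    ∑ i ∈ T ∪ T', m i = h (T ∪ T') := by
  have := sum_union_inter (s₁ := T) (s₂ := T') (f := m)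
  have := hm (T ∪ T')
  have := hm (T ∩ T')
  have := hsub T T' hTT'
  omega

theorem sum_sup_eq_of_sum_eq
    (hsub : ∀ T T' : Finset ι, (T ∩ T').Nonempty → h (T ∪ T') + h (T ∩ T') ≤ h T + h T')
    (hm : ∀ T, ∑ i ∈ T, m i ≤ h T) {i : ι} {𝒯 : Finset (Finset ι)} (h𝒯 : 𝒯.Nonempty)
    (htight : ∀ T ∈ 𝒯, i ∈ T ∧ ∑ j ∈ T, m j = h T) :
    i ∈ 𝒯.sup id ∧ ∑ j ∈ 𝒯.sup id, m j = h (𝒯.sup id) := by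
  induction h𝒯 using Nonempty.cons_induction with
  | singleton T => simpa using htight T (mem_singleton_self T)
  | cons T 𝒯 _ _ ih =>
    obtain ⟨hiT, hT⟩ := htight T (mem_cons_self T 𝒯)
    obtain ⟨hi𝒯, h𝒯⟩ := ih fun T' hT' => htight T' (mem_cons_of_mem hT')
    rw [sup_cons, id_eq, sup_eq_union]
    exact ⟨mem_union_left _ hiT, sum_union_eq_of_sum_eq hsub hm ⟨i, mem_inter.2 ⟨hiT, hi𝒯⟩⟩ hT h𝒯⟩

theorem exists_sum_le_forall_exists_sum_eq [Fintype ι] :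
    ∃ m : ι → ℕ, (∀ T, ∑ i ∈ T, m i ≤ h T) ∧ ∀ i, ∃ T, i ∈ T ∧ ∑ j ∈ T, m j = h T := by
  let feasible := (Fintype.piFinset fun i => range (h {i} + 1)).filter
    fun m : ι → ℕ => ∀ T, ∑ i ∈ T, m i ≤ h T
  have mem_feasible : ∀ m : ι → ℕ, (∀ T, ∑ i ∈ T, m i ≤ h T) → m ∈ feasible := fun m hm =>
    mem_filter.2 ⟨Fintype.mem_piFinset.2 fun i => mem_range_succ_iff.2 (by simpa using hm {i}), hm⟩
  obtain ⟨m, hmem, hmax⟩ := exists_max_image feasible (fun m => ∑ i, m i)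
    ⟨0, mem_feasible 0 fun T => by simp⟩
  have hm := (mem_filter.1 hmem).2
  refine ⟨m, hm, fun i => ?_⟩
  -- `m` is maximal, so raising its `i`-th entry violates some constraint, necessarily one at `i`.
  have : ¬ ∀ T, ∑ j ∈ T, (m + Pi.single i 1 : ι → ℕ) j ≤ h T := fun hfeas => by
    have := hmax _ (mem_feasible _ hfeas)
    simp only [Pi.add_apply, sum_add_distrib, sum_pi_single', if_pos (mem_univ i)] at this
    omega
  push Not at this
  obtain ⟨T, hT⟩ := this
  rw [sum_congr rfl fun j _ => Pi.add_apply m _ j, sum_add_distrib, sum_pi_single'] at hT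
  have := hm T
  split_ifs at hT with hiT
  · exact ⟨T, hiT, by omega⟩
  · omega

theorem exists_sum_le_and_sum_eq_sum_parts [Fintype ι]
    (hsub : ∀ T T' : Finset ι, (T ∩ T').Nonempty → h (T ∪ T') + h (T ∩ T') ≤ h T + h T') :
    ∃ (m : ι → ℕ) (P : Finpartition (univ : Finset ι)),
      (∀ T, ∑ i ∈ T, m i ≤ h T) ∧ ∑ i, m i = ∑ p ∈ P.parts, h p := by
  classical
  obtain ⟨m, hm, hcover⟩ := exists_sum_le_forall_exists_sum_eq (h := h)
  let D (i : ι) : Finset ι :=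
    ((univ : Finset (Finset ι)).filter fun T => i ∈ T ∧ ∑ j ∈ T, m j = h T).sup id
  have hD (i : ι) : i ∈ D i ∧ ∑ j ∈ D i, m j = h (D i) := sum_sup_eq_of_sum_eq hsub hm
    (let ⟨T, hT⟩ := hcover i; ⟨T, mem_filter.2 ⟨mem_univ T, hT⟩⟩)
    (fun T hT => (mem_filter.1 hT).2)
  have subset_D {i : ι} {T : Finset ι} (hiT : i ∈ T) (hT : ∑ j ∈ T, m j = h T) : T ⊆ D i :=
    le_sup (f := id) (mem_filter.2 ⟨mem_univ T, hiT, hT⟩)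
  have D_eq {i j : ι} (hij : j ∈ D i) : D j = D i :=
    have hij' : D i ⊆ D j := subset_D hij (hD i).2
    (subset_D (hij' (hD i).1) (hD j).2).antisymm hij'
  let rel : Setoid ι :=
    { r := fun i j => j ∈ D i
      iseqv :=
        { refl := fun i => (hD i).1
          symm := fun hij => D_eq hij ▸ (hD _).1
          trans := fun hij hjk => D_eq hij ▸ hjk } }
  let P : Finpartition (univ : Finset ι) := .ofSetSetoid rel univ
  have hparts : P.parts = univ.image D := by
    simp [P, Finpartition.ofSetSetoid_parts, rel]
  refine ⟨m, P, hm, ?_⟩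
  calc ∑ i, m i = ∑ p ∈ P.parts, ∑ i ∈ p, m i := by
        simpa only [P.biUnion_parts, id] using sum_biUnion (f := m) P.disjoint
    _ = ∑ p ∈ P.parts, h p := sum_congr rfl fun p hp => by
        obtain ⟨i, -, rfl⟩ := mem_image.1 (hparts ▸ hp)
        exact (hD i).2

end DilworthTruncation

theorem exists_pairwise_disjoint_card_eq {ι α : Type*} [Fintype ι] [Fintype α] (m : ι → ℕ)
    (hm : ∑ i, m i ≤ Fintype.card α) :
    ∃ ρ : ι → Finset α, Pairwise (Disjoint on ρ) ∧ ∀ i, (ρ i).card = m i := by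
  obtain ⟨e⟩ : Nonempty ((Σ i, Fin (m i)) ↪ α) :=
    Embedding.nonempty_of_card_le (by simpa using hm)
  refine ⟨fun i => univ.map ((Embedding.sigmaMk i).trans e), fun i j hij => ?_,
    fun i => by simp⟩
  simp only [disjoint_left, mem_map, mem_univ, true_and,
    Embedding.trans_apply, Embedding.sigmaMk_apply]
  rintro _ ⟨a, rfl⟩ ⟨b, hba⟩
  exact hij (congrArg Sigma.fst (e.injective hba)).symm

section RowPattern

variable {ι : Type*} [Fintype ι] {k n : ℕ} {ρ : ι → Finset (Fin k)} {A : ι → Finset (Fin n)}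

def rowPattern (ρ : ι → Finset (Fin k)) (A : ι → Finset (Fin n)) : Fin k → Finset (Fin n) :=
  fun r => (univ.filter fun i => r ∈ ρ i).sup A

theorem rowPattern_eq (hρ : Pairwise (Disjoint on ρ)) {r : Fin k} {i : ι} (hr : r ∈ ρ i) :
    rowPattern ρ A r = A i := by
  classical
  have : (univ.filter fun j => r ∈ ρ j) = {i} := by
    ext j
    simp only [mem_filter, mem_univ, true_and, mem_singleton]
    exact ⟨fun hj => by_contra fun hji => disjoint_left.1 (hρ hji) hj hr, fun hji => hji ▸ hr⟩
  simp [rowPattern, this]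

theorem rowPattern_eq_empty {r : Fin k} (hr : ∀ i, r ∉ ρ i) : rowPattern ρ A r = ∅ := by
  simp [rowPattern, hr]

theorem patternOrder_rowPattern_le (hρ : Pairwise (Disjoint on ρ)) :
    patternOrder (rowPattern ρ A) ≤ Fintype.card ι := by
  classical
  refine (card_le_card fun s hs => ?_).trans (card_image_le (s := univ) (f := A))
  obtain ⟨hs, r, -, rfl⟩ := by simpa only [mem_erase, mem_image] using hs
  by_cases hr : ∃ i, r ∈ ρ i
  · obtain ⟨i, hi⟩ := hr
    exact rowPattern_eq hρ hi ▸ mem_image_of_mem A (mem_univ i)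
  · exact absurd (rowPattern_eq_empty (not_exists.1 hr)) hs

theorem isGenericZP_rowPattern (hρ : Pairwise (Disjoint on ρ))
    (hcap : ∀ T : Finset ι, T.Nonempty → ∑ i ∈ T, (ρ i).card + (T.inf A).card ≤ k) :
    IsGenericZP (rowPattern ρ A) := by
  classical
  intro I hI
  by_cases hall : ∀ r ∈ I, ∃ i, r ∈ ρ i
  · let T := univ.filter fun i => ∃ r ∈ I, r ∈ ρ i
    have hIT : I ⊆ T.biUnion ρ := fun r hr =>
      let ⟨i, hi⟩ := hall r hr
      mem_biUnion.2 ⟨i, mem_filter.2 ⟨mem_univ i, r, hr, hi⟩, hi⟩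
    have hinf : I.inf (rowPattern ρ A) ≤ T.inf A := Finset.le_inf fun i hi => by
      obtain ⟨r, hrI, hri⟩ := (mem_filter.1 hi).2
      exact (inf_le hrI).trans (rowPattern_eq hρ hri).le
    have hT : T.Nonempty :=
      let ⟨r, hr⟩ := hI
      let ⟨i, hi⟩ := hall r hr
      ⟨i, mem_filter.2 ⟨mem_univ i, r, hr, hi⟩⟩
    have := (card_le_card hIT).trans card_biUnion_le
    have := card_le_card hinf
    have := hcap T hT
    omega
  · push Not at hall
    obtain ⟨r, hrI, hr⟩ := hall
    have : I.inf (rowPattern ρ A) = ∅ :=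
      subset_empty.1 ((inf_le hrI).trans (rowPattern_eq_empty hr).le)
    simp [this]

end RowPattern

theorem card_inf_add_card_inf_le {ι α : Type*} [DecidableEq ι] [Fintype α] [DecidableEq α]
    (A : ι → Finset α) (T T' : Finset ι) :
    (T.inf A).card + (T'.inf A).card ≤ ((T ∪ T').inf A).card + ((T ∩ T').inf A).card := by
  rw [inf_union, inf_eq_inter, ← card_union_add_card_inter]
  have := card_le_card (union_subset (inf_mono inter_subset_left : T.inf A ≤ (T ∩ T').inf A)
    (inf_mono inter_subset_right : T'.inf A ≤ (T ∩ T').inf A))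
  omega

theorem sum_finrank_sub_le_finrank_inf {K V ι : Type*} [DivisionRing K] [AddCommGroup V]
    [Module K V] [FiniteDimensional K V] (s : Finset ι) (f : ι → Submodule K V) :
    ∑ i ∈ s, (Module.finrank K (f i) : ℤ) - (s.card - 1) * Module.finrank K V ≤
      Module.finrank K ↥(s.inf f) := by
  induction s using Finset.cons_induction with
  | empty => rw [Finset.inf_empty, finrank_top]; simp
  | cons a s _ ih =>
    rw [inf_cons, sum_cons, card_cons]
    have := Submodule.finrank_sup_add_finrank_inf_eq (f a) (s.inf f)
    have := Submodule.finrank_le (f a ⊔ s.inf f)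
    push_cast
    linarith

theorem finrank_add_card_le_of_mulVec_apply_eq_zero {K m : Type*} [Field K] [Fintype m]
    [DecidableEq m] {M : Matrix m m K} (hM : IsUnit M.det) {W : Submodule K (m → K)}
    {R : Finset m} (hW : ∀ r ∈ R, ∀ w ∈ W, (M *ᵥ w) r = 0) :
    Module.finrank K W + R.card ≤ Fintype.card m := by
  let N : Matrix R m K := M.submatrix Subtype.val id
  have hrows : LinearIndependent K N.row :=
    (Matrix.linearIndependent_rows_iff_isUnit.2 ((M.isUnit_iff_isUnit_det).2 hM)).comp
      Subtype.val Subtype.val_injective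
  have hN := hrows.rank_matrix
  have hker : W ≤ LinearMap.ker N.mulVecLin := fun w hw =>
    funext fun r => hW r r.2 w hw
  have hrank_nullity := LinearMap.finrank_range_add_finrank_ker N.mulVecLin
  rw [Module.finrank_fintype_fun_eq_card] at hrank_nullity
  rw [Matrix.rank, Fintype.card_coe] at hN
  have := Submodule.finrank_mono hker
  omega

section ColSpan

variable {K : Type*} [Field K] {k n : ℕ} (G : Matrix (Fin k) (Fin n) K)

theorem colSpan_mono {A B : Finset (Fin n)} (hAB : A ⊆ B) : colSpan G A ≤ colSpan G B :=
  Submodule.span_mono (Set.image_mono hAB)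

theorem colSpan_eq_span_range (A : Finset (Fin n)) :
    colSpan G A = Submodule.span K (Set.range fun j : A => fun i => G i j) := by
  rw [colSpan]
  congr 1
  ext
  simp

theorem finrank_colSpan (hkn : k ≤ n) (htop : ∀ A : Finset (Fin n), A.card = k → colSpan G A = ⊤)
    {B : Finset (Fin n)} (hB : B.card ≤ k) : Module.finrank K (colSpan G B) = B.card := by
  obtain ⟨B', hBB', hB'⟩ := exists_superset_card_eq hB (by simpa using hkn)
  have hB'indep : LinearIndependent K fun j : B' => fun i => G i j :=
    linearIndependent_of_top_le_span_of_card_eq_finrank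
      (by rw [← colSpan_eq_span_range, htop B' hB'])
      (by rw [Fintype.card_coe, hB', Module.finrank_fin_fun])
  have hBindep : LinearIndependent K fun j : B => fun i => G i j :=
    hB'indep.comp (fun j : B => (⟨j, hBB' j.2⟩ : B')) fun _ _ h => Subtype.ext (Subtype.mk.inj h)
  rw [colSpan_eq_span_range, finrank_span_eq_card hBindep, Fintype.card_coe]

theorem mulVec_apply_eq_zero_of_mem_colSpan {M : Matrix (Fin k) (Fin k) K} {B : Finset (Fin n)}
    {r : Fin k} (hB : ∀ j ∈ B, (M * G) r j = 0) {w : Fin k → K} (hw : w ∈ colSpan G B) :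
    (M *ᵥ w) r = 0 := by
  suffices colSpan G B ≤ LinearMap.ker ((LinearMap.proj r).comp M.mulVecLin) from this hw
  rw [colSpan, Submodule.span_le]
  rintro _ ⟨j, hj, rfl⟩
  exact hB j hj

end ColSpan

section Bounds

variable {F : Type*} [Field F] {n k ℓ : ℕ} {G : Matrix (Fin k) (Fin n) F}
  {A : Fin ℓ → Finset (Fin n)}

theorem partVal_le_finrank_iInf_colSpan (hkn : k ≤ n)
    (htop : ∀ B : Finset (Fin n), B.card = k → colSpan G B = ⊤) (hA : ∀ i, (A i).card ≤ k)
    (P : Finpartition (univ : Finset (Fin ℓ))) :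
    partVal k A P ≤ Module.finrank F ↥(⨅ i, colSpan G (A i)) := by
  have hle : P.parts.inf (fun p => colSpan G (p.inf A)) ≤ ⨅ i, colSpan G (A i) :=
    le_iInf fun i =>
      let ⟨p, hp, hip⟩ := P.exists_mem (mem_univ i)
      (Finset.inf_le hp).trans (colSpan_mono G (Finset.inf_le hip))
  have hdim : ∀ p ∈ P.parts, Module.finrank F (colSpan G (p.inf A)) = (p.inf A).card :=
    fun p hp =>
      let ⟨i, hi⟩ := P.nonempty_of_mem_parts hp
      finrank_colSpan G hkn htop ((card_le_card (Finset.inf_le hi)).trans (hA i))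
  calc partVal k A P
      = ∑ p ∈ P.parts, (Module.finrank F (colSpan G (p.inf A)) : ℤ)
          - (P.parts.card - 1) * Module.finrank F (Fin k → F) := by
        rw [partVal, Module.finrank_fin_fun,
          sum_congr rfl fun p hp => congrArg (Nat.cast : ℕ → ℤ) (hdim p hp)]
    _ ≤ Module.finrank F ↥(P.parts.inf fun p => colSpan G (p.inf A)) :=
        sum_finrank_sub_le_finrank_inf _ _
    _ ≤ Module.finrank F ↥(⨅ i, colSpan G (A i)) := by
        exact_mod_cast Submodule.finrank_mono hle

theorem exists_finrank_iInf_colSpan_le_partVal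
    (hatt : ∀ S : Fin k → Finset (Fin n), IsGenericZP S → patternOrder S ≤ ℓ → Attains G S)
    (hA : ∀ i, (A i).card ≤ k) :
    ∃ P : Finpartition (univ : Finset (Fin ℓ)),
      Module.finrank F ↥(⨅ i, colSpan G (A i)) ≤ partVal k A P := by
  have hcard {T : Finset (Fin ℓ)} (hT : T.Nonempty) : (T.inf A).card ≤ k :=
    let ⟨i, hi⟩ := hT
    (card_le_card (Finset.inf_le hi)).trans (hA i)
  obtain ⟨m, P, hm, hmP⟩ := exists_sum_le_and_sum_eq_sum_parts
    (h := fun T => k - (T.inf A).card) fun T T' hTT' => by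
      have := card_inf_add_card_inf_le A T T'
      have := hcard (hTT'.mono (inter_subset_left.trans (subset_union_left (s₂ := T'))))
      have := hcard hTT'
      omega
  obtain ⟨ρ, hρ, hρm⟩ := exists_pairwise_disjoint_card_eq (α := Fin k) m
    ((hm univ).trans (Nat.sub_le _ _) |>.trans_eq (Fintype.card_fin k).symm)
  obtain ⟨M, hM, hMG⟩ := hatt (rowPattern ρ A)
    (isGenericZP_rowPattern hρ fun T hT => by
      have := hm T
      have := hcard hT
      simp only [hρm]
      omega)
    ((patternOrder_rowPattern_le hρ).trans_eq (Fintype.card_fin ℓ))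
  have hrank := finrank_add_card_le_of_mulVec_apply_eq_zero hM (R := univ.biUnion ρ)
    fun r hr w hw => by
      obtain ⟨i, -, hri⟩ := mem_biUnion.1 hr
      exact mulVec_apply_eq_zero_of_mem_colSpan G
        (fun j hj => hMG r j (by rwa [rowPattern_eq hρ hri]))
        (iInf_le (fun i => colSpan G (A i)) i hw)
  rw [card_biUnion (hρ.set_pairwise _), sum_congr rfl fun i _ => hρm i, hmP,
    Fintype.card_fin] at hrank
  have hsum : ∑ p ∈ P.parts, ((k - (p.inf A).card : ℕ) : ℤ) =
      P.parts.card * k - ∑ p ∈ P.parts, ((p.inf A).card : ℤ) := by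
    rw [sum_congr rfl fun p hp => Nat.cast_sub (hcard (P.nonempty_of_mem_parts hp)),
      sum_sub_distrib, sum_const, nsmul_eq_mul]
  zify at hrank
  rw [hsum] at hrank
  exact ⟨P, by rw [partVal]; linarith⟩

end Bounds

theorem gzp_implies_mds_general {F : Type*} [Field F] (n k ℓ : ℕ)
    (hkn : k ≤ n)
    (C : Submodule F (Fin n → F))
    (G : Matrix (Fin k) (Fin n) F) (hG : IsGenMatrix C G)
    (hgzp : IsGZP n k ℓ C)
    (A : Fin ℓ → Finset (Fin n)) (hA : ∀ i, (A i).card ≤ k) :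
    IsGreatest {v : ℤ | ∃ P : Finpartition (Finset.univ : Finset (Fin ℓ)), v = partVal k A P}
      ((Module.finrank F ↥(⨅ i, colSpan G (A i))) : ℤ) := by
  obtain ⟨hmds, hattains⟩ := hgzp G hG
  obtain ⟨P, hP⟩ := exists_finrank_iInf_colSpan_le_partVal hattains hA
  refine ⟨⟨P, le_antisymm hP (partVal_le_finrank_iInf_colSpan hkn hmds hA P)⟩, ?_⟩
  rintro _ ⟨P, rfl⟩
  exact partVal_le_finrank_iInf_colSpan hkn hmds hA P

theorem gzp_implies_mds {F : Type*} [Field F] (n k ℓ : ℕ)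
    (hk : 1 ≤ k) (hkn : k ≤ n) (hℓ : 1 ≤ ℓ)
    (C : Submodule F (Fin n → F)) (hC : Module.finrank F C = k)
    (G : Matrix (Fin k) (Fin n) F) (hG : IsGenMatrix C G)
    (hgzp : IsGZP n k ℓ C)
    (A : Fin ℓ → Finset (Fin n)) (hA : ∀ i, (A i).card ≤ k) :
    IsGreatest {v : ℤ | ∃ P : Finpartition (Finset.univ : Finset (Fin ℓ)), v = partVal k A P}
      ((Module.finrank F ↥(⨅ i, colSpan G (A i))) : ℤ) :=
  gzp_implies_mds_general n k ℓ hkn C G hG hgzp A hA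

end
end
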